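/- arXiv:2501.11640 — 7 statements merged into one kernel-verified Lean document; each statement's English description precedes it below -/
import Mathlib

section
/- Let u_1, ..., u_{d-1} and v_1, ..., v_{d-1} be two sequences of vectors in ℂ^d that are phase-unitary equivalent (i.e., there is a unitary T : ℂ^d → ℂ^d and phases θ_j with v_j = e^{iθ_j} T(u_j)), and suppose each sequence is linearly independent. Let u_d, v_d ∈ ℂ^d satisfy ‖u_d‖ = ‖v_d‖, ⟨u_j, u_d⟩ = 0 and ⟨v_j, v_d⟩ = 0 for all j = 1, ..., d-1. Then the extended sequences u_1, ..., u_d and v_1, ..., v_d are also phase-unitary equivalent. -/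
open Complex

/-- Two sequences of vectors in `ℂ^d` are phase-unitary equivalent if there is a
unitary map `T` and phases `θ j` with `v j = e^{i θ j} • T (u j)`. -/
def PhaseUnitaryEquiv {ι : Type*} {d : ℕ}
    (u v : ι → EuclideanSpace ℂ (Fin d)) : Prop :=
  ∃ (T : EuclideanSpace ℂ (Fin d) ≃ₗᵢ[ℂ] EuclideanSpace ℂ (Fin d)) (θ : ι → ℝ),
    ∀ j, v j = Complex.exp (θ j * Complex.I) • T (u j)

/-!
Keep the unitary `T` relating the first `d - 1` vectors. Since `T` preserves inner products,
`T u_d` is orthogonal to every `v_j`, as is `v_d`. The `v_j` are independent, so their orthogonal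
complement is a line; `T u_d` and `v_d` lie on it with equal norms, hence differ by a phase.
-/

open Module Submodule

section InnerProductSpace

variable {𝕜 E ι : Type*} [RCLike 𝕜] [NormedAddCommGroup E] [InnerProductSpace 𝕜 E]

theorem Submodule.mem_orthogonal_span_range_iff {v : ι → E} {x : E} :
    x ∈ (span 𝕜 (Set.range v))ᗮ ↔ ∀ j, inner 𝕜 (v j) x = 0 := by
  rw [← span_singleton_le_iff_mem, ← isOrtho_iff_le, isOrtho_comm, isOrtho_span]
  simp

theorem Submodule.finrank_orthogonal_span_range [Fintype ι] [FiniteDimensional 𝕜 E] {v : ι → E}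
    (hv : LinearIndependent 𝕜 v) :
    finrank 𝕜 (span 𝕜 (Set.range v))ᗮ = finrank 𝕜 E - Fintype.card ι := by
  rw [← finrank_add_finrank_orthogonal (span 𝕜 (Set.range v)), finrank_span_eq_card hv]
  omega

end InnerProductSpace

theorem exists_exp_mul_I_smul_eq_of_norm_eq {E : Type*} [NormedAddCommGroup E] [NormedSpace ℂ E]
    {W : Submodule ℂ E} (hW : finrank ℂ W = 1) {x y : E} (hx : x ∈ W) (hy : y ∈ W)
    (hxy : ‖x‖ = ‖y‖) : ∃ θ : ℝ, y = exp (θ * I) • x := by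
  rcases eq_or_ne x 0 with rfl | hx0
  · exact ⟨0, by simpa [eq_comm] using hxy⟩
  obtain ⟨c, hc⟩ := (finrank_eq_one_iff_of_nonzero' (⟨x, hx⟩ : W) (by simpa using hx0)).1 hW ⟨y, hy⟩
  replace hc : c • x = y := congrArg Subtype.val hc
  have hc1 : ‖c‖ = 1 := by
    rw [← hc, norm_smul] at hxy
    exact (mul_eq_right₀ (norm_ne_zero_iff.2 hx0)).1 hxy.symm
  obtain ⟨θ, rfl⟩ := (norm_eq_one_iff c).1 hc1
  exact ⟨θ, hc.symm⟩

theorem PhaseUnitaryEquiv.snoc {n d : ℕ} {u v : Fin n → EuclideanSpace ℂ (Fin d)}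
    {ud vd : EuclideanSpace ℂ (Fin d)}
    {T : EuclideanSpace ℂ (Fin d) ≃ₗᵢ[ℂ] EuclideanSpace ℂ (Fin d)} {θ : Fin n → ℝ} {φ : ℝ}
    (hT : ∀ j, v j = exp (θ j * I) • T (u j)) (hφ : vd = exp (φ * I) • T ud) :
    PhaseUnitaryEquiv (Fin.snoc u ud) (Fin.snoc v vd) :=
  ⟨T, Fin.snoc θ φ, Fin.lastCases (by simpa using hφ) fun j => by simpa using hT j⟩

theorem stmt_0_general (n : ℕ) (u v : Fin n → EuclideanSpace ℂ (Fin (n + 1)))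
    (hv : LinearIndependent ℂ v)
    (huv : PhaseUnitaryEquiv u v)
    (ud vd : EuclideanSpace ℂ (Fin (n + 1)))
    (hnorm : ‖ud‖ = ‖vd‖)
    (hou : ∀ j, (inner ℂ (u j) ud : ℂ) = 0)
    (hov : ∀ j, (inner ℂ (v j) vd : ℂ) = 0) :
    PhaseUnitaryEquiv (Fin.snoc u ud) (Fin.snoc v vd) := by
  obtain ⟨T, θ, hT⟩ := huv
  have hW : finrank ℂ (span ℂ (Set.range v))ᗮ = 1 := by
    simp [finrank_orthogonal_span_range hv]
  have hTud : T ud ∈ (span ℂ (Set.range v))ᗮ := mem_orthogonal_span_range_iff.2 fun j => by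
    rw [hT j, inner_smul_left, T.inner_map_map, hou j, mul_zero]
  obtain ⟨φ, hφ⟩ := exists_exp_mul_I_smul_eq_of_norm_eq hW hTud
    (mem_orthogonal_span_range_iff.2 hov) (by rw [T.norm_map, hnorm])
  exact PhaseUnitaryEquiv.snoc hT hφ

theorem stmt_0 (n : ℕ) (u v : Fin n → EuclideanSpace ℂ (Fin (n + 1)))
    (hu : LinearIndependent ℂ u) (hv : LinearIndependent ℂ v)
    (huv : PhaseUnitaryEquiv u v)
    (ud vd : EuclideanSpace ℂ (Fin (n + 1)))
    (hnorm : ‖ud‖ = ‖vd‖)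
    (hou : ∀ j, (inner ℂ (u j) ud : ℂ) = 0)
    (hov : ∀ j, (inner ℂ (v j) vd : ℂ) = 0) :
    PhaseUnitaryEquiv (Fin.snoc u ud) (Fin.snoc v vd) :=
  stmt_0_general n u v hv huv ud vd hnorm hou hov
end

section
/- For all real α and β, the quantity sin α · sin β · cos(α − β) lies in the interval [−1/8, 1]. -/
/-!
With `x = cos (α - β)` and `y = cos (α + β)`, the product-to-sum formula
`2 sin α sin β = x - y` turns the quantity into `x (x - y) / 2`. For `|y| ≤ 1` we have
`x² - |x| ≤ x (x - y) ≤ x² + |x|`, and on `|x| ≤ 1` these range over `[-1/4, 2]`: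
the minimum `-1/4` of `x² - |x|` is attained at `|x| = 1/2`.
-/

open Real

section OrderedField

variable {K : Type*} [Field K] [LinearOrder K] [IsStrictOrderedRing K] {x y : K}

lemma abs_mul_le_abs_left (hy : |y| ≤ 1) : |x * y| ≤ |x| := by
  rw [abs_mul]
  exact mul_le_of_le_one_right (abs_nonneg x) hy

lemma neg_quarter_le_mul_sub (hy : |y| ≤ 1) : -(1 / 4 : K) ≤ x * (x - y) := by
  have hxy := (abs_le.mp (abs_mul_le_abs_left (x := x) hy)).2
  nlinarith [sq_nonneg (|x| - 1 / 2), sq_abs x]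

lemma mul_sub_le_two (hx : |x| ≤ 1) (hy : |y| ≤ 1) : x * (x - y) ≤ 2 := by
  have hxy := (abs_le.mp (abs_mul_le_abs_left (x := x) hy)).1
  nlinarith [sq_abs x, abs_nonneg x]

end OrderedField

theorem stmt_4 (α β : ℝ) :
    -(1 / 8 : ℝ) ≤ Real.sin α * Real.sin β * Real.cos (α - β) ∧
      Real.sin α * Real.sin β * Real.cos (α - β) ≤ 1 := by
  have h : Real.sin α * Real.sin β * Real.cos (α - β) =
      cos (α - β) * (cos (α - β) - cos (α + β)) / 2 := by
    rw [← two_mul_sin_mul_sin]; ring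
  rw [h]
  constructor
  · linarith [neg_quarter_le_mul_sub (x := cos (α - β)) (abs_cos_le_one (α + β))]
  · linarith [mul_sub_le_two (abs_cos_le_one (α - β)) (abs_cos_le_one (α + β))]
end

section
/- If real numbers α, β, φ with cos φ ≠ 0 satisfy sin α · sin β · cos(α − β) = −tan² φ, then |φ| ≤ arctan(1/√8) modulo π; more precisely, tan² φ ≤ 1/8. -/
open Real

theorem two_mul_sin_mul_sin_eq_cos_sub_sub_cos_add (α β : ℝ) :
    2 * (sin α * sin β) = cos (α - β) - cos (α + β) := by
  rw [cos_sub, cos_add]; ring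

theorem neg_one_div_eight_le_sin_mul_sin_mul_cos_sub (α β : ℝ) :
    -(1 / 8) ≤ sin α * sin β * cos (α - β) := by
  have hsquare : sin α * sin β * cos (α - β)
      = ((cos (α - β) - cos (α + β) / 2) ^ 2 - cos (α + β) ^ 2 / 4) / 2 := by
    linear_combination cos (α - β) / 2 * two_mul_sin_mul_sin_eq_cos_sub_sub_cos_add α β
  rw [hsquare]
  linarith [sq_nonneg (cos (α - β) - cos (α + β) / 2), cos_sq_le_one (α + β)]

theorem stmt_5_general (α β φ : ℝ)
    (h : Real.sin α * Real.sin β * Real.cos (α - β) = -(Real.tan φ) ^ 2) :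
    (Real.tan φ) ^ 2 ≤ 1 / 8 := by
  linarith [neg_one_div_eight_le_sin_mul_sin_mul_cos_sub α β]

theorem stmt_5 (α β φ : ℝ) (hcφ : Real.cos φ ≠ 0)
    (h : Real.sin α * Real.sin β * Real.cos (α - β) = -(Real.tan φ) ^ 2) :
    (Real.tan φ) ^ 2 ≤ 1 / 8 :=
  stmt_5_general α β φ h
end

section
/- Let b, c ∈ ℂ with b ≠ 0 and c ≠ 0. If the determinant of the 3×3 matrix with rows (1, −1/b, 0), (1, 0, c̄), (0, 1, c̄/b̄) is zero, then |b| = 1 or c = 0. -/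
open Complex

/-- Holds also at `b = 0`, where `1 / 0 = 0` and `(0 : ℂ)⁻¹ = 0` on both sides. -/
lemma det_orthogonality_matrix (b c : ℂ) :
    Matrix.det
      !![1, -1 / b, 0;
         1, 0, (starRingEnd ℂ) c;
         0, 1, (starRingEnd ℂ) c / (starRingEnd ℂ) b] =
      (starRingEnd ℂ) c * ((normSq b : ℂ)⁻¹ - 1) := by
  rw [Matrix.det_fin_three, ← mul_conj]
  simp only [Matrix.of_apply, Matrix.cons_val', Matrix.cons_val_zero, Matrix.cons_val_one,
    Matrix.cons_val_two, Matrix.empty_val', Matrix.cons_val_fin_one, Matrix.head_cons,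
    Matrix.tail_cons, Matrix.head_fin_const]
  rw [mul_inv]
  ring

theorem stmt_6_general (b c : ℂ)
    (hdet : Matrix.det
      !![1, -1 / b, 0;
         1, 0, (starRingEnd ℂ) c;
         0, 1, (starRingEnd ℂ) c / (starRingEnd ℂ) b] = 0) :
    ‖b‖ = 1 ∨ c = 0 := by
  rw [det_orthogonality_matrix, mul_eq_zero, map_eq_zero, sub_eq_zero, inv_eq_one] at hdet
  rcases hdet with hc | hnormSq
  · exact Or.inr hc
  · left
    have hsq : ‖b‖ ^ 2 = 1 := by rw [Complex.sq_norm]; exact_mod_cast hnormSq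
    exact (pow_eq_one_iff_of_nonneg (norm_nonneg b) two_ne_zero).mp hsq

theorem stmt_6 (b c : ℂ) (hb : b ≠ 0) (hc : c ≠ 0)
    (hdet : Matrix.det
      !![1, -1 / b, 0;
         1, 0, (starRingEnd ℂ) c;
         0, 1, (starRingEnd ℂ) c / (starRingEnd ℂ) b] = 0) :
    ‖b‖ = 1 ∨ c = 0 :=
  stmt_6_general b c hdet
end

section
/- The 31 vectors v_1 = (1,0,0), v_2 = (0,1,0), v_3 = (0,0,1), v_4 = (1,1,0), v_5 = (−1,1,0), v_6 = (1,0,1), v_7 = (1,0,−1), v_8 = (0,1,1), v_9 = (0,−1,1), v_10 = (−2,1,0), v_11 = (1,2,0), v_12 = (2,0,1), v_13 = (−2,0,1), v_14 = (1,1,1), v_15 = (−1,1,1), v_16 = (1,−1,1), v_17 = (1,1,−1), v_18 = (0,2,1), v_19 = (0,−2,1), v_20 = (1,0,2), v_21 = (1,0,−2), v_22 = (0,1,2), v_23 = (0,1,−2), v_24 = (−2,1,1), v_25 = (2,−1,1), v_26 = (1,2,1), v_27 = (1,2,−1), v_28 = (1,1,2), v_29 = (−1,1,2), v_30 = (1,−1,2),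 v_31 = (1,1,−2) in ℝ^3 form a Kochen–Specker set: there is no function f : {1,...,31} → {0,1} such that f(i) + f(j) ≤ 1 whenever v_i ⊥ v_j, and f(i) + f(j) + f(k) = 1 whenever v_i, v_j, v_k are pairwise orthogonal. -/
/-!
Each orthogonal triple contains exactly one vector with value `1`, and a `1` forces `0` on every
vector orthogonal to it. Suppose one of the basis vectors `x`, `y`, `z` has value `1`, and fix the
value of one more vector (`(1,0,1)` for `x` and `z`, `(0,1,1)` for `y`). In each of the six branches
these rules propagate to a contradiction, and every propagation step is linear (`a + b = 0` forces
`a = b = 0`, `1 + b ≤ 1` forces `b = 0`), so each branch is infeasible even over the reals. Hence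
`x`, `y`, `z` all have value `0`, although they form an orthogonal triple.
-/

/-- The 31 vectors of the CK-31 Kochen–Specker set in `ℝ^3`. -/
def ck31 : Fin 31 → Fin 3 → ℝ :=
  ![![1, 0, 0], ![0, 1, 0], ![0, 0, 1], ![1, 1, 0], ![-1, 1, 0],
    ![1, 0, 1], ![1, 0, -1], ![0, 1, 1], ![0, -1, 1], ![-2, 1, 0],
    ![1, 2, 0], ![2, 0, 1], ![-2, 0, 1], ![1, 1, 1], ![-1, 1, 1],
    ![1, -1, 1], ![1, 1, -1], ![0, 2, 1], ![0, -2, 1], ![1, 0, 2],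
    ![1, 0, -2], ![0, 1, 2], ![0, 1, -2], ![-2, 1, 1], ![2, -1, 1],
    ![1, 2, 1], ![1, 2, -1], ![1, 1, 2], ![-1, 1, 2], ![1, -1, 2],
    ![1, 1, -2]]

/-- Orthogonality with respect to the standard inner product on `ℝ^3`. -/
def ck31Orth (i j : Fin 31) : Prop := ∑ t : Fin 3, ck31 i t * ck31 j t = 0

/-- Orthogonal triples of CK-31, with 0-based indices: `i` stands for `v_(i+1)`. -/
def ck31Triples : List (Fin 31 × Fin 31 × Fin 31) :=
  [(0, 1, 2), (0, 7, 8), (0, 17, 22), (0, 18, 21), (1, 5, 6), (1, 11, 20), (1, 12, 19),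
    (2, 3, 4), (2, 9, 10), (3, 14, 29), (3, 15, 28), (4, 13, 30), (4, 16, 27), (5, 14, 26),
    (6, 15, 25), (7, 16, 24), (8, 13, 23)]

/-- The orthogonal pairs of CK-31 that lie in no orthogonal triple of `ck31Triples`. -/
def ck31Pairs : List (Fin 31 × Fin 31) :=
  [(5, 16), (6, 13), (7, 15), (8, 14), (9, 25), (9, 26), (10, 23), (10, 24), (11, 28),
    (11, 30), (12, 27), (12, 29), (17, 29), (17, 30), (18, 27), (18, 28), (19, 23), (20, 24),
    (21, 26), (22, 25)]

theorem ck31Triples_pairwise_ne :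
    ∀ t ∈ ck31Triples, t.1 ≠ t.2.1 ∧ t.1 ≠ t.2.2 ∧ t.2.1 ≠ t.2.2 := by
  simp [ck31Triples]

theorem ck31Orth_of_mem_ck31Triples :
    ∀ t ∈ ck31Triples, ck31Orth t.1 t.2.1 ∧ ck31Orth t.1 t.2.2 ∧ ck31Orth t.2.1 t.2.2 := by
  simp only [ck31Triples, List.forall_mem_cons, List.not_mem_nil, IsEmpty.forall_iff,
    implies_true, and_true, ck31Orth, ck31, Fin.sum_univ_three, Matrix.cons_val]
  norm_num

theorem ck31Orth_of_mem_ck31Pairs : ∀ p ∈ ck31Pairs, ck31Orth p.1 p.2 := by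
  simp only [ck31Pairs, List.forall_mem_cons, List.not_mem_nil, IsEmpty.forall_iff,
    implies_true, and_true, ck31Orth, ck31, Fin.sum_univ_three, Matrix.cons_val]
  norm_num

theorem ck31_constraints_infeasible {f : Fin 31 → ℕ}
    (hT : ∀ t ∈ ck31Triples, f t.1 + f t.2.1 + f t.2.2 = 1)
    (hP : ∀ p ∈ ck31Pairs, f p.1 + f p.2 ≤ 1) : False := by
  have h5 : f 5 = 0 ∨ f 5 = 1 :=
    Nat.le_one_iff_eq_zero_or_eq_one.mp (by linarith [hT (1, 5, 6) (by simp [ck31Triples])])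
  have h7 : f 7 = 0 ∨ f 7 = 1 :=
    Nat.le_one_iff_eq_zero_or_eq_one.mp (by linarith [hT (0, 7, 8) (by simp [ck31Triples])])
  simp only [ck31Triples, ck31Pairs, List.forall_mem_cons, List.not_mem_nil, IsEmpty.forall_iff,
    implies_true, and_true] at hT hP
  casesm* _ ∧ _
  have hx : f 0 < 1 := by
    by_contra! h0
    rcases h5 with h5 | h5 <;> linarith
  have hy : f 1 < 1 := by
    by_contra! h1
    rcases h7 with h7 | h7 <;> linarith
  have hz : f 2 < 1 := by
    by_contra! h2
    rcases h5 with h5 | h5 <;> linarith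
  linarith

theorem stmt_12 :
    ¬ ∃ f : Fin 31 → ℕ,
        (∀ i, f i = 0 ∨ f i = 1) ∧
        (∀ i j, ck31Orth i j → f i + f j ≤ 1) ∧
        (∀ i j k, i ≠ j → i ≠ k → j ≠ k →
          ck31Orth i j → ck31Orth i k → ck31Orth j k →
          f i + f j + f k = 1) := by
  rintro ⟨f, -, hexcl, hbasis⟩
  refine ck31_constraints_infeasible (fun t ht => ?_)
    (fun p hp => hexcl _ _ (ck31Orth_of_mem_ck31Pairs p hp))
  obtain ⟨hij, hik, hjk⟩ := ck31Triples_pairwise_ne t ht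
  obtain ⟨oij, oik, ojk⟩ := ck31Orth_of_mem_ck31Triples t ht
  exact hbasis _ _ _ hij hik hjk oij oik ojk
end

section
/- The 13 vectors of the Yu–Oh set in ℝ^3, namely (1,0,0), (0,1,0), (0,0,1), (0,1,−1), (1,0,−1), (1,−1,0), (0,1,1), (1,0,1), (1,1,0), (−1,1,1), (1,−1,1), (1,1,−1), (1,1,1), admit a KS assignment: there exists f : {1,...,13} → {0,1} with f(i) + f(j) ≤ 1 for orthogonal pairs and f(i) + f(j) + f(k) = 1 for each triple of mutually orthogonal vectors in the set. -/
/-!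
Take the three vectors `(0,0,1)`, `(0,1,1)`, `(1,0,1)`, which are pairwise non-orthogonal. The only
orthogonal triples of the Yu–Oh set are the four bases `{x, y, z}`, `{x, (0,1,±1)}`, `{y, (1,0,±1)}`,
`{z, (1,±1,0)}`, and each contains exactly one of the three chosen vectors, so their indicator is a
KS assignment.
-/

/-- The 13 vectors of the Yu–Oh set in `ℝ^3`. -/
def yuOh : Fin 13 → Fin 3 → ℝ :=
  ![![1, 0, 0], ![0, 1, 0], ![0, 0, 1], ![0, 1, -1], ![1, 0, -1],
    ![1, -1, 0], ![0, 1, 1], ![1, 0, 1], ![1, 1, 0], ![-1, 1, 1],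
    ![1, -1, 1], ![1, 1, -1], ![1, 1, 1]]

/-- Orthogonality with respect to the standard inner product on `ℝ^3`. -/
def yuOhOrth (i j : Fin 13) : Prop := ∑ t : Fin 3, yuOh i t * yuOh j t = 0

def IsKSAssignment {ι : Type*} (orth : ι → ι → Prop) (f : ι → ℕ) : Prop :=
  (∀ i, f i = 0 ∨ f i = 1) ∧
  (∀ i j, orth i j → f i + f j ≤ 1) ∧
  (∀ i j k, i ≠ j → i ≠ k → j ≠ k → orth i j → orth i k → orth j k → f i + f j + f k = 1)

theorem isKSAssignment_indicator {ι : Type*} {orth : ι → ι → Prop} {S : Set ι}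
    [DecidablePred (· ∈ S)]
    (h_indep : ∀ i ∈ S, ∀ j ∈ S, ¬ orth i j)
    (h_meets : ∀ i j k, orth i j → orth i k → orth j k → i ∈ S ∨ j ∈ S ∨ k ∈ S) :
    IsKSAssignment orth (fun i ↦ if i ∈ S then 1 else 0) := by
  have no_pair {i j} (hij : orth i j) : ¬ (i ∈ S ∧ j ∈ S) := fun ⟨hi, hj⟩ ↦ h_indep i hi j hj hij
  refine ⟨fun i ↦ by dsimp only; split_ifs <;> simp, fun i j hij ↦ ?_,
    fun i j k _ _ _ hij hik hjk ↦ ?_⟩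
  · have := no_pair hij
    dsimp only
    split_ifs <;> simp_all
  · have := no_pair hij
    have := no_pair hik
    have := no_pair hjk
    have := h_meets i j k hij hik hjk
    dsimp only
    split_ifs <;> simp_all

-- An integer copy of `yuOh`, on which orthogonality is decidable.
def yuOhInt : Fin 13 → Fin 3 → ℤ :=
  ![![1, 0, 0], ![0, 1, 0], ![0, 0, 1], ![0, 1, -1], ![1, 0, -1],
    ![1, -1, 0], ![0, 1, 1], ![1, 0, 1], ![1, 1, 0], ![-1, 1, 1],
    ![1, -1, 1], ![1, 1, -1], ![1, 1, 1]]

theorem yuOh_eq_cast (i : Fin 13) (t : Fin 3) : yuOh i t = yuOhInt i t := by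
  fin_cases i <;> fin_cases t <;> norm_num [yuOh, yuOhInt]

theorem yuOhOrth_iff (i j : Fin 13) :
    yuOhOrth i j ↔ ∑ t : Fin 3, yuOhInt i t * yuOhInt j t = 0 := by
  simp only [yuOhOrth, yuOh_eq_cast]
  exact_mod_cast Iff.rfl

def yuOhChosen : Set (Fin 13) := {2, 6, 7}

instance : DecidablePred (· ∈ yuOhChosen) := fun i ↦
  inferInstanceAs (Decidable (i = 2 ∨ i = 6 ∨ i = 7))

theorem yuOhChosen_not_orth : ∀ i ∈ yuOhChosen, ∀ j ∈ yuOhChosen, ¬ yuOhOrth i j := by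
  simp only [yuOhOrth_iff]
  decide

theorem yuOhChosen_meets_orth_triple (i j k : Fin 13) :
    yuOhOrth i j → yuOhOrth i k → yuOhOrth j k →
      i ∈ yuOhChosen ∨ j ∈ yuOhChosen ∨ k ∈ yuOhChosen := by
  simp only [yuOhOrth_iff]
  revert i j k
  decide

theorem stmt_13 :
    ∃ f : Fin 13 → ℕ,
      (∀ i, f i = 0 ∨ f i = 1) ∧
      (∀ i j, yuOhOrth i j → f i + f j ≤ 1) ∧
      (∀ i j k, i ≠ j → i ≠ k → j ≠ k →
        yuOhOrth i j → yuOhOrth i k → yuOhOrth j k →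
        f i + f j + f k = 1) :=
  ⟨_, isKSAssignment_indicator yuOhChosen_not_orth yuOhChosen_meets_orth_triple⟩
end

section
/- Let G be the orthogonality graph of the CK-31 vectors (31 vertices, with vertices i and j adjacent iff v_i ⊥ v_j in ℝ^3, using the listed CK-31 vectors). Then the set A_0 = {1, 2, 3, 17} 2-percolates G: defining A_k = A_{k-1} ∪ {v : v has at least 2 neighbors in A_{k-1}}, one has A_5 = V(G). -/
/-- Adjacency in the orthogonality graph of CK-31. -/
def ck31Adj (i j : Fin 31) : Prop :=
  i ≠ j ∧ ∑ t : Fin 3, ck31 i t * ck31 j t = 0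

/-- One round of 2-neighbor bootstrap percolation on the CK-31 orthogonality graph. -/
def infectStep (A : Set (Fin 31)) : Set (Fin 31) :=
  A ∪ {v | ∃ w₁ w₂, w₁ ≠ w₂ ∧ w₁ ∈ A ∧ w₂ ∈ A ∧ ck31Adj v w₁ ∧ ck31Adj v w₂}

/-! All CK-31 vectors have integer coordinates, so orthogonality is decidable. Recasting a round of
infection as a `Finset` computation (a vertex is infected once at least two of its neighbours are)
turns the five rounds into a finite computation that the kernel evaluates. -/

open Finset

section Bootstrap

variable {V : Type*} [Fintype V] [DecidableEq V] (r : V → V → Prop) [DecidableRel r]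

def bootstrapStep (A : Finset V) : Finset V :=
  A ∪ ({v | 1 < #{w ∈ A | r v w}} : Finset V)

theorem coe_bootstrapStep (A : Finset V) :
    (bootstrapStep r A : Set V) =
      (A : Set V) ∪ {v | ∃ w₁ w₂, w₁ ≠ w₂ ∧ w₁ ∈ (A : Set V) ∧ w₂ ∈ (A : Set V) ∧ r v w₁ ∧ r v w₂} := by
  ext v
  simp only [bootstrapStep, coe_union, coe_filter_univ, Set.mem_union, Set.mem_ofPred_eq,
    mem_coe, one_lt_card, mem_filter]
  refine or_congr_right ⟨?_, ?_⟩
  · rintro ⟨w₁, ⟨h₁, r₁⟩, w₂, ⟨h₂, r₂⟩, hne⟩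
    exact ⟨w₁, w₂, hne, h₁, h₂, r₁, r₂⟩
  · rintro ⟨w₁, w₂, hne, h₁, h₂, r₁, r₂⟩
    exact ⟨w₁, ⟨h₁, r₁⟩, w₂, ⟨h₂, r₂⟩, hne⟩

end Bootstrap

def ck31Int : Fin 31 → Fin 3 → ℤ :=
  ![![1, 0, 0], ![0, 1, 0], ![0, 0, 1], ![1, 1, 0], ![-1, 1, 0],
    ![1, 0, 1], ![1, 0, -1], ![0, 1, 1], ![0, -1, 1], ![-2, 1, 0],
    ![1, 2, 0], ![2, 0, 1], ![-2, 0, 1], ![1, 1, 1], ![-1, 1, 1],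
    ![1, -1, 1], ![1, 1, -1], ![0, 2, 1], ![0, -2, 1], ![1, 0, 2],
    ![1, 0, -2], ![0, 1, 2], ![0, 1, -2], ![-2, 1, 1], ![2, -1, 1],
    ![1, 2, 1], ![1, 2, -1], ![1, 1, 2], ![-1, 1, 2], ![1, -1, 2],
    ![1, 1, -2]]

theorem ck31_eq_intCast (i : Fin 31) (t : Fin 3) : ck31 i t = ck31Int i t := by
  fin_cases i <;> fin_cases t <;> simp [ck31, ck31Int]

theorem ck31Adj_iff (i j : Fin 31) :
    ck31Adj i j ↔ i ≠ j ∧ ∑ t : Fin 3, ck31Int i t * ck31Int j t = 0 := by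
  simp only [ck31Adj, ck31_eq_intCast]
  norm_cast

instance : DecidableRel ck31Adj := fun i j => decidable_of_iff _ (ck31Adj_iff i j).symm

theorem semiconj_coe_bootstrapStep_infectStep :
    Function.Semiconj ((↑) : Finset (Fin 31) → Set (Fin 31)) (bootstrapStep ck31Adj) infectStep :=
  fun A => by rw [coe_bootstrapStep, infectStep]

theorem stmt_18 :
    infectStep^[5] ({0, 1, 2, 16} : Set (Fin 31)) = Set.univ := by
  have hcoe := semiconj_coe_bootstrapStep_infectStep.iterate_right 5 {0, 1, 2, 16}
  have hfin : (bootstrapStep ck31Adj)^[5] {0, 1, 2, 16} = univ := by decide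
  rw [hfin, coe_univ] at hcoe
  simpa using hcoe.symm
end
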